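/- Let φ : ℝ² → ℂ be a Schwartz function and let τ, b ∈ ℝ. Define h : ℝ → ℂ by h(y) := φ(τ y + b, y). Then h is a Schwartz function and its Fourier transform satisfies supp(𝓕h) ⊆ closure of { τξ + η : (ξ,η) ∈ supp(𝓕φ) }. Consequently, if m : ℝ → ℂ is a bounded continuous function with m(σ) = 1 for every σ in that closure, then 𝓕h = m · 𝓕h. -/

import Mathlib

/-!
The affine shear `A (x, y) = (x + τ y + b, y)` carries the vertical axis onto the line
`{(τ y + b, y)}`, so `h` is the restriction of `φ ∘ A` to `{0} × ℝ`, and the Fourier transform of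
`φ ∘ A` at `(ξ, η)` is `e(b ξ) 𝓕φ(ξ, η - τ ξ)`. By Fourier inversion in the plane, restricting
to the vertical axis amounts to integrating out the first frequency variable (the Fourier slice
theorem), whence `𝓕h(η) = ∫ e(b ξ) 𝓕φ(ξ, η - τ ξ) dξ`. This vanishes unless
`η = τ ξ + (η - τ ξ)` with `(ξ, η - τ ξ)` in the support of `𝓕φ`.
-/

open MeasureTheory Real FourierTransform SchwartzMap
open scoped RealInnerProductSpace

noncomputable section

def euclideanOfProd : (ℝ × ℝ) ≃L[ℝ] EuclideanSpace ℝ (Fin 2) :=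
  ((EuclideanSpace.equiv (Fin 2) ℝ).trans (ContinuousLinearEquiv.finTwoArrow ℝ ℝ)).symm

lemma inner_euclideanOfProd (p q : ℝ × ℝ) :
    ⟪euclideanOfProd p, euclideanOfProd q⟫ = p.1 * q.1 + p.2 * q.2 := by
  simp [euclideanOfProd, PiLp.inner_apply, Fin.sum_univ_two, mul_comm]

lemma measurePreserving_euclideanOfProd : MeasurePreserving euclideanOfProd := by
  have h : MeasurePreserving
      ((MeasurableEquiv.toLp 2 (Fin 2 → ℝ)).symm.trans MeasurableEquiv.finTwoArrow) :=
    (volume_preserving_finTwoArrow ℝ).comp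
      (EuclideanSpace.volume_preserving_symm_measurableEquiv_toLp (Fin 2))
  exact h.symm _

lemma integral_comp_euclideanOfProd (g : EuclideanSpace ℝ (Fin 2) → ℂ) :
    ∫ p : ℝ × ℝ, g (euclideanOfProd p) = ∫ v, g v :=
  measurePreserving_euclideanOfProd.integral_comp
    euclideanOfProd.toHomeomorph.measurableEmbedding g

/-- Mathlib's Fourier transform needs an inner product space, and `ℝ × ℝ` carries the sup norm,
so the transform is taken on the Euclidean plane and pulled back. -/
def fourierProd (f : 𝓢(ℝ × ℝ, ℂ)) : 𝓢(ℝ × ℝ, ℂ) :=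
  compCLMOfContinuousLinearEquiv ℂ euclideanOfProd
    (𝓕 (compCLMOfContinuousLinearEquiv ℂ euclideanOfProd.symm f))

lemma fourierProd_apply (f : 𝓢(ℝ × ℝ, ℂ)) (w : ℝ × ℝ) :
    fourierProd f w = ∫ p : ℝ × ℝ, 𝐞 (-(p.1 * w.1 + p.2 * w.2)) • f p := by
  simp only [fourierProd, compCLMOfContinuousLinearEquiv_apply, Function.comp_apply, fourier_coe,
    Real.fourier_eq, ← integral_comp_euclideanOfProd, inner_euclideanOfProd,
    ContinuousLinearEquiv.symm_apply_apply]

lemma fourierProd_inversion (f : 𝓢(ℝ × ℝ, ℂ)) (p : ℝ × ℝ) :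
    f p = ∫ w : ℝ × ℝ, 𝐞 (w.1 * p.1 + w.2 * p.2) • fourierProd f w := by
  set g := compCLMOfContinuousLinearEquiv ℂ euclideanOfProd.symm f
  have hg : f p = 𝓕⁻ (𝓕 g) (euclideanOfProd p) := by
    rw [FourierTransform.fourierInv_fourier_eq]
    simp [g]
  rw [hg, fourierInv_coe, Real.fourierInv_eq, ← integral_comp_euclideanOfProd]
  simp only [inner_euclideanOfProd, fourierProd, compCLMOfContinuousLinearEquiv_apply,
    Function.comp_apply, g]

def shearAffine (τ b : ℝ) : ℝ × ℝ ≃ᵐ ℝ × ℝ where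
  toFun p := (p.1 + τ * p.2 + b, p.2)
  invFun q := (q.1 - τ * q.2 - b, q.2)
  left_inv p := Prod.ext (by ring) rfl
  right_inv q := Prod.ext (by ring) rfl
  measurable_toFun := by simp only [Equiv.coe_fn_mk]; fun_prop
  measurable_invFun := by simp only [Equiv.coe_fn_symm_mk]; fun_prop

@[simp] lemma shearAffine_apply (τ b : ℝ) (p : ℝ × ℝ) :
    shearAffine τ b p = (p.1 + τ * p.2 + b, p.2) := rfl

lemma measurePreserving_shearAffine (τ b : ℝ) : MeasurePreserving (shearAffine τ b) := by
  have h : MeasurePreserving (fun p : ℝ × ℝ => (p.1, p.2 + (τ * p.1 + b)))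
      (volume.prod volume) (volume.prod volume) :=
    (MeasurePreserving.id volume).skew_product (g := fun y x => x + (τ * y + b)) (by fun_prop)
      (.of_forall fun y => map_add_right_eq_self volume _)
  rw [Measure.volume_eq_prod]
  convert (Measure.measurePreserving_swap.comp h).comp Measure.measurePreserving_swap using 1
  ext p <;> simp [add_assoc]

lemma hasTemperateGrowth_shearAffine (τ b : ℝ) :
    Function.HasTemperateGrowth (shearAffine τ b) := by
  have hL := (((ContinuousLinearMap.fst ℝ ℝ ℝ) + τ • ContinuousLinearMap.snd ℝ ℝ ℝ).prod
    (ContinuousLinearMap.snd ℝ ℝ ℝ)).hasTemperateGrowth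
  convert hL.add (Function.HasTemperateGrowth.const ((b, 0) : ℝ × ℝ)) using 1
  ext p <;> simp

lemma norm_le_norm_shearAffine (τ b : ℝ) (p : ℝ × ℝ) :
    ‖p‖ ≤ (1 + |τ| + |b|) * (1 + ‖shearAffine τ b p‖) := by
  set q := shearAffine τ b p
  have hq₁ : |q.1| ≤ ‖q‖ := norm_fst_le q
  have hq₂ : |q.2| ≤ ‖q‖ := norm_snd_le q
  have hp₁ : p.1 = q.1 - τ * q.2 - b := by simp only [q, shearAffine_apply]; ring
  have hp₂ : p.2 = q.2 := rfl
  have hq : 0 ≤ ‖q‖ := norm_nonneg q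
  refine norm_prod_le_iff.2 ⟨?_, ?_⟩ <;> simp only [Real.norm_eq_abs, hp₁, hp₂]
  · calc |q.1 - τ * q.2 - b| ≤ |q.1| + |τ| * |q.2| + |b| := by
          rw [← abs_mul]
          exact (abs_sub _ _).trans (add_le_add_left (abs_sub _ _) _)
      _ ≤ _ := by nlinarith [abs_nonneg τ, abs_nonneg b, abs_nonneg q.2]
  · nlinarith [abs_nonneg τ, abs_nonneg b]

def compShearAffine (τ b : ℝ) (φ : 𝓢(ℝ × ℝ, ℂ)) : 𝓢(ℝ × ℝ, ℂ) :=
  compCLM ℂ (hasTemperateGrowth_shearAffine τ b)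
    ⟨1, 1 + |τ| + |b|, fun p => by rw [pow_one]; exact norm_le_norm_shearAffine τ b p⟩ φ

@[simp] lemma compShearAffine_apply (τ b : ℝ) (φ : 𝓢(ℝ × ℝ, ℂ)) (p : ℝ × ℝ) :
    compShearAffine τ b φ p = φ (shearAffine τ b p) := rfl

lemma fourierProd_compShearAffine (τ b : ℝ) (φ : 𝓢(ℝ × ℝ, ℂ)) (ξ η : ℝ) :
    fourierProd (compShearAffine τ b φ) (ξ, η) = 𝐞 (b * ξ) • fourierProd φ (ξ, η - τ * ξ) := by
  have hphase : ∀ p : ℝ × ℝ, 𝐞 (-(p.1 * ξ + p.2 * η)) =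
      𝐞 (b * ξ) * 𝐞 (-((shearAffine τ b p).1 * ξ + (shearAffine τ b p).2 * (η - τ * ξ))) := by
    intro p
    rw [← AddChar.map_add_eq_mul]
    congr 1
    simp only [shearAffine_apply]
    ring
  simp only [fourierProd_apply, hphase, mul_smul, Circle.smul_def (𝐞 (b * ξ))]
  rw [integral_smul]
  congr 1
  exact (measurePreserving_shearAffine τ b).integral_comp'
    (g := fun q => 𝐞 (-(q.1 * ξ + q.2 * (η - τ * ξ))) • φ q)

lemma norm_apply_le_seminorm_mul_inv_one_add_sq {F E : Type*}
    [NormedAddCommGroup F] [NormedSpace ℝ F] [NormedAddCommGroup E] [NormedSpace ℝ E]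
    (f : 𝓢(ℝ × F, E)) (ξ : ℝ) (u : F) :
    ‖f (ξ, u)‖ ≤ (SchwartzMap.seminorm ℝ 0 0 f + SchwartzMap.seminorm ℝ 2 0 f) * (1 + ξ ^ 2)⁻¹ := by
  have h₀ := norm_pow_mul_le_seminorm ℝ f 0 (ξ, u)
  have h₂ := norm_pow_mul_le_seminorm ℝ f 2 (ξ, u)
  have hξ : ξ ^ 2 ≤ ‖(ξ, u)‖ ^ 2 := by
    rw [← sq_abs]
    exact pow_le_pow_left₀ (abs_nonneg ξ) (norm_fst_le (ξ, u)) 2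
  rw [le_mul_inv_iff₀ (by positivity)]
  nlinarith [norm_nonneg (f (ξ, u))]

lemma continuous_integral_fst {F E : Type*}
    [NormedAddCommGroup F] [NormedSpace ℝ F] [NormedAddCommGroup E] [NormedSpace ℝ E]
    (f : 𝓢(ℝ × F, E)) :
    Continuous fun u => ∫ ξ, f (ξ, u) :=
  continuous_of_dominated (fun u => (f.continuous.comp (by fun_prop)).aestronglyMeasurable)
    (fun u => .of_forall fun ξ => norm_apply_le_seminorm_mul_inv_one_add_sq f ξ u)
    (integrable_inv_one_add_sq.const_mul _) (.of_forall fun ξ => f.continuous.comp (by fun_prop))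

def restrictYAxis (ψ : 𝓢(ℝ × ℝ, ℂ)) : 𝓢(ℝ, ℂ) :=
  compCLMOfAntilipschitz ℂ (ContinuousLinearMap.inr ℝ ℝ ℝ).hasTemperateGrowth
    (Isometry.inr (α := ℝ) (β := ℝ)).antilipschitz ψ

@[simp] lemma restrictYAxis_apply (ψ : 𝓢(ℝ × ℝ, ℂ)) (y : ℝ) :
    restrictYAxis ψ y = ψ (0, y) := rfl

lemma restrictYAxis_eq_fourierInv (ψ : 𝓢(ℝ × ℝ, ℂ)) :
    ⇑(restrictYAxis ψ) = 𝓕⁻ fun u => ∫ ξ, fourierProd ψ (ξ, u) := by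
  ext y
  set Ψ := fourierProd ψ
  have hint : Integrable (fun w : ℝ × ℝ => (𝐞 (w.2 * y) : ℂ) * Ψ w) (volume.prod volume) :=
    Ψ.integrable.bdd_mul (c := 1) (by fun_prop) (.of_forall fun w => (Circle.norm_coe _).le)
  calc restrictYAxis ψ y = ∫ w : ℝ × ℝ, (𝐞 (w.2 * y) : ℂ) * Ψ w := by
        simp [fourierProd_inversion ψ (0, y), Circle.smul_def, Ψ]
    _ = ∫ u, ∫ ξ, (𝐞 (u * y) : ℂ) * Ψ (ξ, u) := by
        rw [Measure.volume_eq_prod, integral_prod_symm _ hint]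
    _ = 𝓕⁻ (fun u => ∫ ξ, Ψ (ξ, u)) y := by
        simp [Real.fourierInv_eq, Circle.smul_def, integral_const_mul, mul_comm y]

theorem fourier_restrictYAxis (ψ : 𝓢(ℝ × ℝ, ℂ)) :
    𝓕 (restrictYAxis ψ : ℝ → ℂ) = fun η => ∫ ξ, fourierProd ψ (ξ, η) := by
  set k := fun η => ∫ ξ, fourierProd ψ (ξ, η)
  have hk : Integrable k := by
    have h := (fourierProd ψ).integrable (μ := volume)
    rw [Measure.volume_eq_prod] at h
    exact h.integral_prod_right
  have hFk : Integrable (𝓕 k) := by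
    have h : 𝓕 k = fun w => restrictYAxis ψ (-w) := by
      ext w
      rw [restrictYAxis_eq_fourierInv, Real.fourierInv_eq_fourier_neg, neg_neg]
    rw [h]
    exact (restrictYAxis ψ).integrable.comp_neg
  rw [restrictYAxis_eq_fourierInv]
  exact (continuous_integral_fst _).fourier_fourierInv_eq hk hFk

theorem fourier_restrictYAxis_compShearAffine (φ : 𝓢(ℝ × ℝ, ℂ)) (τ b η : ℝ) :
    𝓕 (restrictYAxis (compShearAffine τ b φ) : ℝ → ℂ) η =
      ∫ ξ, 𝐞 (b * ξ) • fourierProd φ (ξ, η - τ * ξ) := by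
  simp only [fourier_restrictYAxis, fourierProd_compShearAffine]

lemma support_fourier_restrictYAxis_compShearAffine (φ : 𝓢(ℝ × ℝ, ℂ)) (τ b : ℝ) :
    Function.support (𝓕 (restrictYAxis (compShearAffine τ b φ) : ℝ → ℂ)) ⊆
      {s | ∃ q ∈ tsupport (fourierProd φ), s = τ * q.1 + q.2} := by
  intro η hη
  by_contra hη_notMem
  have hvanish : ∀ ξ, fourierProd φ (ξ, η - τ * ξ) = 0 := fun ξ =>
    image_eq_zero_of_notMem_tsupport fun hq => hη_notMem ⟨_, hq, by ring⟩
  exact hη (by simp [fourier_restrictYAxis_compShearAffine, hvanish])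

lemma fourierChar_neg_smul (x : ℝ) (z : ℂ) :
    𝐞 (-x) • z = z * Complex.exp (-(2 * π * Complex.I * x)) := by
  rw [Circle.smul_def, Real.fourierChar_apply, smul_eq_mul, mul_comm]
  congr 2
  push_cast
  ring

end

/-- The reproducing identity (5.45): the restriction `h(y) = φ(τy + b, y)` of a Schwartz
function to a straight line is Schwartz, its one-dimensional frequency support lies in the
closure of the projected set `{τξ + η}`, and hence any bounded continuous multiplier equal to
`1` on that set reproduces `𝓕h`. -/
theorem stmt12 (φ : SchwartzMap (ℝ × ℝ) ℂ) (τ b : ℝ)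
    (Fφ : ℝ × ℝ → ℂ)
    (hFφ : ∀ w : ℝ × ℝ, Fφ w =
      ∫ p : ℝ × ℝ, φ p * Complex.exp
        (-(2 * (Real.pi : ℂ) * Complex.I * ((p.1 : ℂ) * (w.1 : ℂ) + (p.2 : ℂ) * (w.2 : ℂ)))))
    (h : ℝ → ℂ) (hh : ∀ y : ℝ, h y = φ (τ * y + b, y))
    (Fh : ℝ → ℂ)
    (hFh : ∀ ξ : ℝ, Fh ξ =
      ∫ y : ℝ, h y * Complex.exp (-(2 * (Real.pi : ℂ) * Complex.I * (y : ℂ) * (ξ : ℂ)))) :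
    (∃ hS : SchwartzMap ℝ ℂ, ∀ y : ℝ, hS y = h y) ∧
    tsupport Fh ⊆ closure {s : ℝ | ∃ q ∈ tsupport Fφ, s = τ * q.1 + q.2} ∧
    ∀ m : ℝ → ℂ, Continuous m → (∃ B : ℝ, ∀ σ : ℝ, ‖m σ‖ ≤ B) →
      (∀ σ ∈ closure {s : ℝ | ∃ q ∈ tsupport Fφ, s = τ * q.1 + q.2}, m σ = 1) →
      ∀ ξ : ℝ, Fh ξ = m ξ * Fh ξ := by
  have hFφ_eq : Fφ = fourierProd φ := funext fun w => by
    simp only [hFφ, fourierProd_apply, fourierChar_neg_smul]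
    congr 1 with p
    push_cast
    ring_nf
  have hh_eq : h = restrictYAxis (compShearAffine τ b φ) := funext fun y => by simp [hh]
  have hFh_eq : Fh = 𝓕 h := funext fun ξ => by
    simp only [hFh, Real.fourier_real_eq, fourierChar_neg_smul]
    congr 1 with y
    push_cast
    ring_nf
  have hsupp : tsupport Fh ⊆ closure {s : ℝ | ∃ q ∈ tsupport Fφ, s = τ * q.1 + q.2} := by
    rw [hFh_eq, hh_eq, hFφ_eq]
    exact closure_mono (support_fourier_restrictYAxis_compShearAffine φ τ b)
  refine ⟨⟨_, fun y => congrFun hh_eq.symm y⟩, hsupp, fun m _ _ hm ξ => ?_⟩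
  by_cases hξ : ξ ∈ tsupport Fh
  · rw [hm ξ (hsupp hξ), one_mul]
  · rw [image_eq_zero_of_notMem_tsupport hξ, mul_zero]
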